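/- Let X be a complex Banach space and L(X) the Banach algebra of bounded linear operators on X. Let M = [[A, B], [C, D]] ∈ M₂(L(X)) and suppose A and D have strongly Drazin inverses. If B D D^D = 0, D^π C B = 0 and D^π C A = 0, where D^D is the Drazin inverse of D and D^π = I − D·D^D, then M has a Hirano inverse in M₂(L(X)). -/

import Mathlib

/-!
An element `a` of a ring has a Hirano inverse as soon as `a - a ^ 3` is nilpotent: in the
commutative ring generated by `a`, the idempotent `a ^ 2` modulo the nilradical lifts to an
idempotent `e`, and `a * e` is invertible in the corner `e R e`.

A strongly Drazin invertible `a` has `a - a ^ 3` nilpotent, since `a` agrees with the idempotent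
`a a^D` modulo a commuting nilpotent. With `p = D D^D`, write `M = Q + (S + R)` where
`Q = [[0, 0], [(1 - p) C, D (1 - p)]]`, `S = [[A, B], [0, 0]]` and `R = [[0, 0], [p C, D p]]`.
Here `Q` is nilpotent, `S` and `R` are triangular with diagonal entries `d` for which `d - d ^ 3`
is nilpotent, and the hypotheses give `S R = 0` and `Q (S + R) = 0`. Finally, if `x y = 0` and
both `x - x ^ 3` and `y - y ^ 3` are nilpotent, then `w = (x + y) - (x + y) ^ 3` satisfies
`x w = (x - x ^ 3) x` and `w = c x + (y - y ^ 3)` for some `c`, which forces `w` to be nilpotent.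
-/

/-- `a` has a Hirano inverse: there exists `z` with `az = za`, `z = zaz`,
and `a^2 - az` nilpotent. -/
def HasHiranoInverse {R : Type*} [Ring R] (a : R) : Prop :=
  ∃ z : R, a * z = z * a ∧ z = z * a * z ∧ IsNilpotent (a ^ 2 - a * z)

/-- `a` has a strongly Drazin inverse: there exists `z` with `az = za`, `z = zaz`,
and `a - az` nilpotent. -/
def HasStronglyDrazinInverse {R : Type*} [Ring R] (a : R) : Prop :=
  ∃ z : R, a * z = z * a ∧ z = z * a * z ∧ IsNilpotent (a - a * z)

open Matrix

section CommRing

variable {R : Type*} [CommRing R]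

theorem exists_isIdempotentElem_isNilpotent_sub {b : R} (h : IsNilpotent (b - b ^ 2)) :
    ∃ e : R, IsIdempotentElem e ∧ IsNilpotent (b - e) := by
  let π := Ideal.Quotient.mk (nilradical R)
  have hker : ∀ x ∈ RingHom.ker π, IsNilpotent x := fun x hx => by
    rwa [Ideal.mk_ker, mem_nilradical] at hx
  have hb : IsIdempotentElem (π b) := by
    rw [IsIdempotentElem, ← map_mul, ← sub_eq_zero, ← map_sub, Ideal.Quotient.eq_zero_iff_mem,
      mem_nilradical, ← neg_sub, isNilpotent_neg_iff, ← pow_two]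
    exact h
  obtain ⟨e, he, hπe⟩ := exists_isIdempotentElem_eq_of_ker_isNilpotent π hker _ ⟨b, rfl⟩ hb
  refine ⟨e, he, hker _ ?_⟩
  rw [RingHom.mem_ker, map_sub, hπe, sub_self]

theorem hasHiranoInverse_of_isNilpotent_sq_sub {a e : R} (he : IsIdempotentElem e)
    (h : IsNilpotent (a ^ 2 - e)) : HasHiranoInverse a := by
  -- `a ^ 2 * e = e * (1 - s)` with `s` nilpotent, so `a * e * (1 - s)⁻¹` inverts `a` on `e`.
  have hs : IsNilpotent ((e - a ^ 2) * e) :=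
    (Commute.all _ _).isNilpotent_mul_right (by simpa using h.neg)
  obtain ⟨u, hu⟩ := hs.isUnit_one_sub
  have ha2 : a ^ 2 * e * ↑u⁻¹ = e := by
    rw [show a ^ 2 * e = e * (1 - (e - a ^ 2) * e) by linear_combination (e + 1 - a ^ 2) * he.eq,
      ← hu, mul_assoc, Units.mul_inv, mul_one]
  refine ⟨a * e * ↑u⁻¹, by ring, ?_, ?_⟩
  · calc a * e * ↑u⁻¹ = a * (e * e) * ↑u⁻¹ := by rw [he.eq]
      _ = a ^ 2 * e * ↑u⁻¹ * (a * e * ↑u⁻¹) := by rw [ha2]; ring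
      _ = _ := by ring
  · rwa [show a * (a * e * ↑u⁻¹) = a ^ 2 * e * ↑u⁻¹ by ring, ha2]

end CommRing

section Ring

variable {R : Type*} [Ring R]

theorem HasHiranoInverse.map {S F : Type*} [Ring S] [FunLike F R S] [RingHomClass F R S]
    (f : F) {a : R} (h : HasHiranoInverse a) : HasHiranoInverse (f a) := by
  obtain ⟨z, hcomm, hz, hnil⟩ := h
  refine ⟨f z, by rw [← map_mul, hcomm, map_mul], by rw [← map_mul, ← map_mul, ← hz], ?_⟩
  simpa using hnil.map f

open scoped IsMulCommutative in
theorem hasHiranoInverse_of_isNilpotent_sub_pow_three {a : R} (h : IsNilpotent (a - a ^ 3)) :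
    HasHiranoInverse a := by
  let S := Subring.closure ({a} : Set R)
  have : IsMulCommutative S := Subring.isMulCommutative_closure (by rintro x rfl y rfl; rfl)
  let a' : S := ⟨a, Subring.subset_closure rfl⟩
  have h' : IsNilpotent (a' - a' ^ 3) :=
    (IsNilpotent.map_iff (f := S.subtype) Subtype.val_injective).mp h
  have hsq : IsNilpotent (a' ^ 2 - (a' ^ 2) ^ 2) := by
    rw [show a' ^ 2 - (a' ^ 2) ^ 2 = a' * (a' - a' ^ 3) by ring]
    exact (Commute.all _ _).isNilpotent_mul_left h'
  obtain ⟨e, he, hsqe⟩ := exists_isIdempotentElem_isNilpotent_sub hsq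
  exact (hasHiranoInverse_of_isNilpotent_sq_sub he hsqe).map S.subtype

theorem isNilpotent_sub_pow_three_of_isIdempotentElem {a e : R} (he : IsIdempotentElem e)
    (hae : Commute a e) (h : IsNilpotent (a - e)) : IsNilpotent (a - a ^ 3) := by
  have key : a - a ^ 3 = (a - e) * (1 - a ^ 2 - a * e - e) := by
    have h2 : e * a ^ 2 = a ^ 2 * e := (hae.symm.pow_right 2).eq
    have h3 : e * (a * e) = a * e := by rw [← mul_assoc, ← hae.eq, mul_assoc, he.eq]
    calc a - a ^ 3 = (a - e) * (1 - a ^ 2 - a * e - e)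
          - (e * a ^ 2 - a ^ 2 * e) - (e * (a * e) - a * e) - (e * e - e) := by noncomm_ring
      _ = _ := by rw [h2, h3, he.eq]; abel
  have hca : Commute (a - e) a := (Commute.refl a).sub_left hae.symm
  have hce : Commute (a - e) e := hae.sub_left (Commute.refl e)
  rw [key]
  exact ((((Commute.one_right _).sub_right (hca.pow_right 2)).sub_right
    (hca.mul_right hce)).sub_right hce).isNilpotent_mul_right h

theorem isIdempotentElem_mul_of_eq_mul_mul {a z : R} (hz : z = z * a * z) :
    IsIdempotentElem (a * z) := by
  rw [IsIdempotentElem, mul_assoc, ← mul_assoc z, ← hz]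

theorem HasStronglyDrazinInverse.isNilpotent_sub_pow_three {a : R}
    (h : HasStronglyDrazinInverse a) : IsNilpotent (a - a ^ 3) := by
  obtain ⟨z, hcomm, hz, hnil⟩ := h
  exact isNilpotent_sub_pow_three_of_isIdempotentElem (isIdempotentElem_mul_of_eq_mul_mul hz)
    ((Commute.refl a).mul_right hcomm) hnil

theorem isNilpotent_of_semiconjBy_of_eq_mul_add {x w u c v : R} (hxw : SemiconjBy x w u)
    (hw : w = c * x + v) (hu : IsNilpotent u) (hv : IsNilpotent v) : IsNilpotent w := by
  obtain ⟨m, hm⟩ := hu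
  obtain ⟨n, hn⟩ := hv
  -- Once `u ^ m = 0`, `x * w ^ k = u ^ k * x` vanishes, so further factors of `w` act as `v`.
  have hpow : ∀ k, w ^ (k + m) = v ^ k * w ^ m := by
    intro k
    induction k with
    | zero => simp
    | succ k ih =>
      have hx : x * w ^ (k + m) = 0 := by
        rw [(hxw.pow_right _).eq, pow_add, hm, mul_zero, zero_mul]
      rw [add_right_comm, pow_succ']
      nth_rewrite 1 [hw]
      rw [add_mul, mul_assoc, hx, mul_zero, zero_add, ih, ← mul_assoc, ← pow_succ']
  exact ⟨n + m, by rw [hpow, hn, zero_mul]⟩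

theorem isNilpotent_add_sub_pow_three_of_mul_eq_zero {x y : R} (hxy : x * y = 0)
    (hx : IsNilpotent (x - x ^ 3)) (hy : IsNilpotent (y - y ^ 3)) :
    IsNilpotent (x + y - (x + y) ^ 3) := by
  have hsemi : SemiconjBy x (x + y) x := by rw [SemiconjBy, mul_add, hxy, add_zero]
  refine isNilpotent_of_semiconjBy_of_eq_mul_add (x := x) (c := 1 - x ^ 2 - y * x - y ^ 2)
    ?_ ?_ hx hy
  · rw [SemiconjBy, mul_sub, (hsemi.pow_right 3).eq, hsemi.eq]
    noncomm_ring
  · calc x + y - (x + y) ^ 3 = (1 - x ^ 2 - y * x - y ^ 2) * x + (y - y ^ 3)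
          - (x * (x * y) + x * y * x + x * y * y + y * (x * y)) := by noncomm_ring
      _ = _ := by rw [hxy]; simp

theorem IsNilpotent.isNilpotent_sub_pow_three {x : R} (h : IsNilpotent x) :
    IsNilpotent (x - x ^ 3) := by
  rw [show x - x ^ 3 = x * (1 - x ^ 2) by noncomm_ring]
  exact ((Commute.one_right x).sub_right ((Commute.refl x).pow_right 2)).isNilpotent_mul_right h

end Ring

namespace Matrix

variable {R : Type*} [Ring R]

theorem zero_fin_two : (0 : Matrix (Fin 2) (Fin 2) R) = !![0, 0; 0, 0] := by
  rw [eta_fin_two 0]; rfl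

theorem exists_pow_lowerTriangular_fin_two (a c d : R) (n : ℕ) :
    ∃ s : R, !![a, 0; c, d] ^ n = !![a ^ n, 0; s, d ^ n] := by
  induction n with
  | zero => exact ⟨0, by rw [pow_zero, one_fin_two, pow_zero, pow_zero]⟩
  | succ n ih =>
    obtain ⟨s, hs⟩ := ih
    exact ⟨s * a + d ^ n * c, by rw [pow_succ, hs, mul_fin_two]; simp [pow_succ]⟩

theorem isNilpotent_lowerTriangular_fin_two {a d : R} (c : R) (ha : IsNilpotent a)
    (hd : IsNilpotent d) : IsNilpotent !![a, 0; c, d] := by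
  obtain ⟨p, hp⟩ := ha
  obtain ⟨q, hq⟩ := hd
  obtain ⟨s, hs⟩ := exists_pow_lowerTriangular_fin_two a c d p
  obtain ⟨t, ht⟩ := exists_pow_lowerTriangular_fin_two a c d q
  exact ⟨q + p, by rw [pow_add, ht, hs, hp, hq, mul_fin_two, zero_fin_two]; simp⟩

theorem isNilpotent_lowerTriangular_fin_two_sub_pow_three {a d : R} (c : R)
    (ha : IsNilpotent (a - a ^ 3)) (hd : IsNilpotent (d - d ^ 3)) :
    IsNilpotent (!![a, 0; c, d] - !![a, 0; c, d] ^ 3) := by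
  obtain ⟨s, hs⟩ := exists_pow_lowerTriangular_fin_two a c d 3
  rw [hs, show !![a, 0; c, d] - !![a ^ 3, 0; s, d ^ 3] = !![a - a ^ 3, 0; c - s, d - d ^ 3] by
      ext i j; fin_cases i <;> fin_cases j <;> simp]
  exact isNilpotent_lowerTriangular_fin_two _ ha hd

theorem isNilpotent_upperTriangular_fin_two_sub_pow_three {a d : R} (b : R)
    (ha : IsNilpotent (a - a ^ 3)) (hd : IsNilpotent (d - d ^ 3)) :
    IsNilpotent (!![a, b; 0, d] - !![a, b; 0, d] ^ 3) := by
  let swap := reindexRingEquiv R (Equiv.swap (0 : Fin 2) 1)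
  have hswap : swap !![a, b; 0, d] = !![d, 0; b, a] := by
    ext i j; fin_cases i <;> fin_cases j <;> rfl
  rw [← IsNilpotent.map_iff swap.injective, map_sub, map_pow, hswap]
  exact isNilpotent_lowerTriangular_fin_two_sub_pow_three _ hd ha

end Matrix

section Ring

variable {R : Type*} [Ring R]

theorem isNilpotent_fin_two_sub_pow_three {A B C D p : R} (hp : IsIdempotentElem p)
    (hDp : Commute D p) (hA : IsNilpotent (A - A ^ 3))
    (hDp3 : IsNilpotent (D * p - (D * p) ^ 3)) (hDq : IsNilpotent (D * (1 - p)))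
    (hBp : B * p = 0) (hCB : (1 - p) * C * B = 0) (hCA : (1 - p) * C * A = 0) :
    IsNilpotent (!![A, B; C, D] - !![A, B; C, D] ^ 3) := by
  have hqp : (1 - p) * p = 0 := by rw [sub_mul, one_mul, hp.eq, sub_self]
  have hsplit : !![A, B; C, D] = !![0, 0; (1 - p) * C, D * (1 - p)]
      + (!![A, B; 0, 0] + !![0, 0; p * C, D * p]) := by
    ext i j; fin_cases i <;> fin_cases j <;> simp <;> noncomm_ring
  have hQP :
      !![0, 0; (1 - p) * C, D * (1 - p)] * (!![A, B; 0, 0] + !![0, 0; p * C, D * p]) = 0 := by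
    have hqD : Commute (1 - p) D := (Commute.one_left D).sub_left hDp.symm
    have hpC : D * (1 - p) * (p * C) = 0 := by
      rw [mul_assoc, ← mul_assoc (1 - p), hqp, zero_mul, mul_zero]
    have hpD : D * (1 - p) * (D * p) = 0 := by
      rw [mul_assoc, ← mul_assoc (1 - p), hqD.eq, mul_assoc, hqp, mul_zero, mul_zero]
    rw [mul_add, mul_fin_two, mul_fin_two, zero_fin_two]
    ext i j; fin_cases i <;> fin_cases j <;> simp [hCA, hCB, hpC, hpD]
  have hSR : !![A, B; 0, 0] * !![0, 0; p * C, D * p] = 0 := by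
    rw [mul_fin_two, zero_fin_two]
    ext i j; fin_cases i <;> fin_cases j <;> simp [← mul_assoc, hBp, hDp.eq]
  rw [hsplit]
  refine isNilpotent_add_sub_pow_three_of_mul_eq_zero hQP ?_
    (isNilpotent_add_sub_pow_three_of_mul_eq_zero hSR ?_ ?_)
  · exact (isNilpotent_lowerTriangular_fin_two _ .zero hDq).isNilpotent_sub_pow_three
  · exact isNilpotent_upperTriangular_fin_two_sub_pow_three _ hA (by simp)
  · exact isNilpotent_lowerTriangular_fin_two_sub_pow_three _ (by simp) hDp3

theorem hasHiranoInverse_fin_two {A B C D D' : R} (hA : HasStronglyDrazinInverse A)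
    (hD : D * D' = D' * D) (hD' : D' = D' * D * D') (hDn : IsNilpotent (D - D * D'))
    (h1 : B * D * D' = 0) (h2 : (1 - D * D') * C * B = 0) (h3 : (1 - D * D') * C * A = 0) :
    HasHiranoInverse !![A, B; C, D] := by
  have hp := isIdempotentElem_mul_of_eq_mul_mul hD'
  have hDp : Commute D (D * D') := (Commute.refl D).mul_right hD
  have hDp3 : IsNilpotent (D * (D * D') - (D * (D * D')) ^ 3) := by
    rw [hDp.mul_pow, hp.pow_succ_eq 2, ← sub_mul]
    exact (hDp.sub_left (hDp.pow_left 3)).isNilpotent_mul_right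
      (HasStronglyDrazinInverse.isNilpotent_sub_pow_three ⟨D', hD, hD', hDn⟩)
  have hDq : IsNilpotent (D * (1 - D * D')) := by
    have hpq : D * D' * (1 - D * D') = 0 := by rw [mul_sub, mul_one, hp.eq, sub_self]
    rw [show D * (1 - D * D') = (D - D * D') * (1 - D * D') by rw [sub_mul, hpq, sub_zero]]
    exact ((Commute.one_right _).sub_right (hDp.sub_left (Commute.refl _))).isNilpotent_mul_right
      hDn
  exact hasHiranoInverse_of_isNilpotent_sub_pow_three <|
    isNilpotent_fin_two_sub_pow_three hp hDp hA.isNilpotent_sub_pow_three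
      hDp3 hDq (by rwa [← mul_assoc]) h2 h3

end Ring

variable {X : Type*} [NormedAddCommGroup X] [NormedSpace ℂ X] [CompleteSpace X]

theorem hirano_perturb_thm27 (A B C D DD : X →L[ℂ] X)
    (hA : HasStronglyDrazinInverse A)
    (hDD : D * DD = DD * D ∧ DD = DD * D * DD ∧ IsNilpotent (D - D * DD))
    (h1 : B * D * DD = 0)
    (h2 : (1 - D * DD) * C * B = 0)
    (h3 : (1 - D * DD) * C * A = 0) :
    HasHiranoInverse (!![A, B; C, D] : Matrix (Fin 2) (Fin 2) (X →L[ℂ] X)) :=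
  hasHiranoInverse_fin_two hA hDD.1 hDD.2.1 hDD.2.2 h1 h2 h3
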